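/- For every natural number n, twice the number ℓ(GD_n) of covering pairs in the Grand Dyck lattice GD_n equals n times the central binomial coefficient C(2n, n); in other words ℓ(GD_n) = n·C(2n,n)/2 and the Hasse index of GD_n is exactly n/2. -/

import Mathlib

/-- Steps of a (Grand) Dyck path: up `U = (1,1)` and down `D = (1,-1)`. -/
inductive Step : Type
  | U : Step
  | D : Step
  deriving DecidableEq

/-- The height of a path: number of up steps minus number of down steps. -/
def height (w : List Step) : ℤ := (w.count Step.U : ℤ) - (w.count Step.D : ℤ)

/-- A Dyck path of semilength `n`: a word of length `2n` with `n` up steps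
(hence `n` down steps) all of whose prefixes have nonnegative height. -/
def IsDyck (n : ℕ) (w : List Step) : Prop :=
  w.length = 2 * n ∧ w.count Step.U = n ∧ ∀ i : ℕ, 0 ≤ height (w.take i)

/-- A Grand Dyck path of semilength `n`: a word of length `2n` with `n` up steps. -/
def IsGrandDyck (n : ℕ) (w : List Step) : Prop :=
  w.length = 2 * n ∧ w.count Step.U = n

/-- The order on paths: pointwise comparison of the heights after each number of steps. -/
def PathLe (w w' : List Step) : Prop :=
  ∀ i : ℕ, height (w.take i) ≤ height (w'.take i)

/-- Strict order on paths. -/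
def PathLt (w w' : List Step) : Prop := PathLe w w' ∧ ¬ PathLe w' w

/-- `Covers P w w'` : within the class of paths satisfying `P`, the path `w'` covers `w`,
i.e. `w < w'` and no path of the class lies strictly between them. -/
def Covers (P : List Step → Prop) (w w' : List Step) : Prop :=
  P w ∧ P w' ∧ PathLt w w' ∧ ∀ z : List Step, P z → ¬ (PathLt w z ∧ PathLt z w')

/-- Number of occurrences of the factor `xy` in the word `w`. -/
def countFactor (x y : Step) (w : List Step) : ℕ :=
  ((Finset.range w.length).filter
    (fun i => w[i]? = some x ∧ w[i + 1]? = some y)).card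

/-- Number of occurrences of the factor `xy` in the word `w` whose starting height
(the height after the first `i` steps, the factor occupying positions `i` and `i+1`,
`0`-indexed) is at least `1`. -/
def countFactorHigh (x y : Step) (w : List Step) : ℕ :=
  ((Finset.range w.length).filter
    (fun i => w[i]? = some x ∧ w[i + 1]? = some y ∧ 1 ≤ height (w.take i))).card

/-- The number of edges of the Hasse diagram of the Grand Dyck lattice `GD_n`,
i.e. the number of covering pairs of Grand Dyck paths of semilength `n`. -/
noncomputable def grandDyckEdges (n : ℕ) : ℕ :=
  Nat.card {p : List Step × List Step // Covers (IsGrandDyck n) p.1 p.2}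

/-! A path `w` is covered exactly by the paths obtained from it by turning one valley `DU` into a
peak `UD`. Such a flip raises the height at a single point by `2`, and parity leaves no room in
between. Conversely, if `w < w'`, the first up step of `w` taken at a point where `w` lies strictly
below `w'` is preceded by a down step, and flipping that valley stays below `w'`. So the edges of
`GD_(m+1)` correspond to paths with a marked valley, and deleting the valley identifies these with
pairs (position in `0..2m`, path in `GD_m`): `ℓ(GD_(m+1)) = (2m+1)·C(2m,m) = (m+1)·C(2m+2,m+1)/2`. -/

open Step

theorem height_append (a b : List Step) : height (a ++ b) = height a + height b := by
  simp only [height, List.count_append]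
  push_cast
  ring

theorem height_add_length (v : List Step) : height v + v.length = 2 * v.count U := by
  induction v with
  | nil => rfl
  | cons s v ih => cases s <;> simp [height] at * <;> omega

theorem IsGrandDyck.height_eq_zero {n : ℕ} {w : List Step} (hw : IsGrandDyck n w) :
    height w = 0 := by
  have := height_add_length w
  rw [hw.1, hw.2] at this
  omega

/-- Reading past the end of a word (`none`) contributes `0`. -/
def stepVal : Option Step → ℤ
  | some U => 1
  | some D => -1
  | none => 0

theorem stepVal_injective : Function.Injective stepVal := by
  rintro (_ | _ | _) (_ | _ | _) h <;> simp_all [stepVal]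

theorem stepVal_le_one (o : Option Step) : stepVal o ≤ 1 := by
  rcases o with _ | _ | _ <;> simp [stepVal]

theorem neg_one_le_stepVal (o : Option Step) : -1 ≤ stepVal o := by
  rcases o with _ | _ | _ <;> simp [stepVal]

theorem height_take_add_one (w : List Step) (i : ℕ) :
    height (w.take (i + 1)) = height (w.take i) + stepVal w[i]? := by
  rw [List.take_add_one, height_append]
  rcases w[i]? with _ | _ | _ <;> rfl

theorem height_take_of_length_le {w : List Step} {i : ℕ} (h : w.length ≤ i) :
    height (w.take i) = height w := by
  rw [List.take_of_length_le h]

theorem two_dvd_height_take_add {w : List Step} {i : ℕ} (hi : i ≤ w.length) :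
    (2 : ℤ) ∣ height (w.take i) + i := by
  have := height_add_length (w.take i)
  rw [List.length_take_of_le hi] at this
  omega

theorem getElem?_eq_U_or_D {w : List Step} {k : ℕ} (hk : k < w.length) :
    w[k]? = some U ∨ w[k]? = some D := by
  rw [List.getElem?_eq_getElem hk]
  cases w[k] <;> simp

theorem eq_of_height_take_eq {w w' : List Step}
    (h : ∀ i, height (w.take i) = height (w'.take i)) : w = w' := by
  refine List.ext_getElem? fun i => stepVal_injective ?_
  have hw := height_take_add_one w i
  have hw' := height_take_add_one w' i
  rw [h, h i] at hw
  omega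

theorem PathLe.refl (w : List Step) : PathLe w w := fun _ => le_rfl

theorem PathLe.antisymm {w w' : List Step} (h : PathLe w w') (h' : PathLe w' w) : w = w' :=
  eq_of_height_take_eq fun i => le_antisymm (h i) (h' i)

theorem pathLt_iff_pathLe_and_ne {w w' : List Step} : PathLt w w' ↔ PathLe w w' ∧ w ≠ w' :=
  ⟨fun h => ⟨h.1, by rintro rfl; exact h.2 (PathLe.refl w)⟩,
    fun h => ⟨h.1, fun h' => h.2 (h.1.antisymm h')⟩⟩

def IsValley (w : List Step) (i : ℕ) : Prop :=
  w[i]? = some D ∧ w[i + 1]? = some U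

def flipAt (w : List Step) (i : ℕ) : List Step :=
  w.take i ++ [U, D] ++ w.drop (i + 2)

theorem isValley_append {A C : List Step} {i : ℕ} (hA : A.length = i) :
    IsValley (A ++ [D, U] ++ C) i := by
  subst hA
  constructor <;> simp [List.append_assoc]

namespace IsValley

variable {w : List Step} {i : ℕ}

theorem add_one_lt_length (hv : IsValley w i) : i + 1 < w.length :=
  (List.getElem?_eq_some_iff.1 hv.2).1

theorem eq_append (hv : IsValley w i) : w = w.take i ++ [D, U] ++ w.drop (i + 2) := by
  obtain ⟨hi, hD⟩ := List.getElem?_eq_some_iff.1 hv.1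
  obtain ⟨hi1, hU⟩ := List.getElem?_eq_some_iff.1 hv.2
  conv_lhs => rw [← List.take_append_drop i w, List.drop_eq_getElem_cons hi,
    List.drop_eq_getElem_cons hi1]
  simp [hD, hU]

theorem height_take_flipAt (hv : IsValley w i) (j : ℕ) :
    height ((flipAt w i).take j) = height (w.take j) + if j = i + 1 then 2 else 0 := by
  have hA : (w.take i).length = i := List.length_take_of_le (by have := hv.add_one_lt_length; omega)
  conv_rhs => rw [hv.eq_append]
  simp only [flipAt, List.append_assoc, List.take_append, height_append, hA]
  rcases h : j - i with _ | _ | k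
  · rw [if_neg (show j ≠ i + 1 by omega)]; simp [height]
  · rw [if_pos (show j = i + 1 by omega)]; simp [height]; ring
  · rw [if_neg (show j ≠ i + 1 by omega)]; simp [height]

theorem flipAt_perm (hv : IsValley w i) : (flipAt w i).Perm w := by
  conv_rhs => rw [hv.eq_append]
  exact ((List.Perm.swap D U []).append_left _).append_right _

theorem isGrandDyck_flipAt {n : ℕ} (hv : IsValley w i) (hw : IsGrandDyck n w) :
    IsGrandDyck n (flipAt w i) :=
  ⟨hv.flipAt_perm.length_eq ▸ hw.1, hv.flipAt_perm.count_eq U ▸ hw.2⟩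

theorem pathLt_flipAt (hv : IsValley w i) : PathLt w (flipAt w i) := by
  refine ⟨fun j => ?_, fun h => ?_⟩
  · rw [hv.height_take_flipAt]
    split_ifs <;> omega
  · have := h (i + 1)
    rw [hv.height_take_flipAt, if_pos rfl] at this
    omega

theorem flipAt_inj {i' : ℕ} (hv : IsValley w i) (hv' : IsValley w i')
    (h : flipAt w i = flipAt w i') : i = i' := by
  have := hv.height_take_flipAt (i + 1)
  rw [h, hv'.height_take_flipAt] at this
  split_ifs at this <;> omega


theorem covers {n : ℕ} (hv : IsValley w i) (hw : IsGrandDyck n w) :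
    Covers (IsGrandDyck n) w (flipAt w i) := by
  refine ⟨hw, hv.isGrandDyck_flipAt hw, hv.pathLt_flipAt, fun z hz ⟨hwz, hzf⟩ => ?_⟩
  rw [pathLt_iff_pathLe_and_ne] at hwz hzf
  have hflip := hv.height_take_flipAt
  have hi : i + 1 ≤ w.length := hv.add_one_lt_length.le
  have hpar_w := two_dvd_height_take_add hi
  have hpar_z := two_dvd_height_take_add (hz.1.trans hw.1.symm ▸ hi)
  have hlo := hwz.1 (i + 1)
  have hhi := hzf.1 (i + 1)
  rw [hflip, if_pos rfl] at hhi
  -- away from `i + 1` the paths `w` and `flipAt w i` agree, and parity pins `z` at `i + 1`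
  have hsqueeze : ∀ j, j ≠ i + 1 → height (z.take j) = height (w.take j) := fun j hj => by
    have := hwz.1 j
    have := hzf.1 j
    rw [hflip, if_neg hj] at this
    omega
  obtain hz_low | hz_high : height (z.take (i + 1)) = height (w.take (i + 1)) ∨
      height (z.take (i + 1)) = height (w.take (i + 1)) + 2 := by omega
  · refine hwz.2 (eq_of_height_take_eq fun j => ?_).symm
    rcases eq_or_ne j (i + 1) with rfl | hj
    exacts [hz_low, hsqueeze j hj]
  · refine hzf.2 (eq_of_height_take_eq fun j => ?_)
    rw [hflip]
    rcases eq_or_ne j (i + 1) with rfl | hj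
    · rw [if_pos rfl, hz_high]
    · rw [if_neg hj, hsqueeze j hj, add_zero]

end IsValley

theorem exists_isValley_flipAt_pathLe {w w' : List Step} (hlen : w.length = w'.length)
    (hend : height w = height w') (hle : PathLe w w') (hne : w ≠ w') :
    ∃ i, IsValley w i ∧ PathLe (flipAt w i) w' := by
  set S : ℕ → Prop := fun k => height (w.take k) < height (w'.take k)
  have hS_lt : ∀ k, S k → k < w.length := fun k hk => by
    by_contra! h
    simp only [S, height_take_of_length_le h, height_take_of_length_le (hlen ▸ h), hend] at hk
    exact lt_irrefl _ hk
  obtain ⟨k₀, hk₀⟩ : ∃ k, S k := by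
    by_contra! h
    exact hne (eq_of_height_take_eq fun k => le_antisymm (hle k) (not_lt.1 (h k)))
  -- the last point below `w'` is followed by an up step of `w`
  have hU : ∃ k, S k ∧ w[k]? = some U := by
    set k := Nat.findGreatest S w.length
    have hk : S k := Nat.findGreatest_spec (hS_lt k₀ hk₀).le hk₀
    have hk1 : ¬ S (k + 1) := Nat.findGreatest_is_greatest (Nat.lt_succ_self k) (hS_lt k hk)
    refine ⟨k, hk, (getElem?_eq_U_or_D (hS_lt k hk)).resolve_right fun hD => hk1 ?_⟩
    have h := height_take_add_one w k
    have h' := height_take_add_one w' k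
    have := neg_one_le_stepVal w'[k]?
    rw [hD, stepVal] at h
    simp only [S] at hk ⊢
    omega
  -- the first such up step is preceded by a down step of `w`
  set p := Nat.find hU
  obtain ⟨hp, hpU⟩ : S p ∧ w[p]? = some U := Nat.find_spec hU
  have hp0 : p ≠ 0 := by rintro h; simp [S, h, height] at hp
  have hp1 : p - 1 + 1 = p := by omega
  have hvalley : IsValley w (p - 1) := by
    rw [IsValley, hp1]
    refine ⟨(getElem?_eq_U_or_D (by have := hS_lt p hp; omega)).resolve_left fun hU' => ?_, hpU⟩
    refine Nat.find_min hU (by omega) ⟨?_, hU'⟩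
    have h := height_take_add_one w (p - 1)
    have h' := height_take_add_one w' (p - 1)
    have := stepVal_le_one w'[p - 1]?
    rw [hp1, hU', stepVal] at h
    rw [hp1] at h'
    simp only [S] at hp ⊢
    omega
  refine ⟨p - 1, hvalley, fun j => ?_⟩
  have hpar := two_dvd_height_take_add (hS_lt p hp).le
  have hpar' := two_dvd_height_take_add (hlen ▸ (hS_lt p hp).le)
  rw [hvalley.height_take_flipAt, hp1]
  split_ifs with hj
  · subst hj
    simp only [S] at hp
    omega
  · simpa using hle j

theorem covers_isGrandDyck_iff {n : ℕ} {w w' : List Step} :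
    Covers (IsGrandDyck n) w w' ↔ IsGrandDyck n w ∧ ∃ i, IsValley w i ∧ w' = flipAt w i := by
  refine ⟨fun ⟨hw, hw', hlt, hmin⟩ => ⟨hw, ?_⟩, fun ⟨hw, i, hv, h⟩ => h ▸ hv.covers hw⟩
  rw [pathLt_iff_pathLe_and_ne] at hlt
  obtain ⟨i, hv, hle⟩ := exists_isValley_flipAt_pathLe (hw.1.trans hw'.1.symm)
    (hw.height_eq_zero.trans hw'.height_eq_zero.symm) hlt.1 hlt.2
  refine ⟨i, hv, by_contra fun hne => hmin _ (hv.isGrandDyck_flipAt hw) ⟨hv.pathLt_flipAt, ?_⟩⟩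
  exact pathLt_iff_pathLe_and_ne.2 ⟨hle, Ne.symm hne⟩

instance : Fintype Step := ⟨{U, D}, fun s => by cases s <;> simp⟩

instance (L k : ℕ) : Finite {v : List Step // v.length = L ∧ v.count U = k} :=
  ((List.finite_length_eq Step L).subset fun _ hv => hv.1).to_subtype

theorem card_length_add_one_count_add_one (L k : ℕ) :
    Nat.card {v : List Step // v.length = L + 1 ∧ v.count U = k + 1} =
      Nat.card {t : List Step // t.length = L ∧ t.count U = k + 1} +
        Nat.card {t : List Step // t.length = L ∧ t.count U = k} := by
  rw [← Nat.card_sum]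
  refine Nat.card_congr (Equiv.ofBijective
    (Sum.elim (fun t => ⟨D :: t.1, by simp [t.2.1, t.2.2]⟩)
      (fun t => ⟨U :: t.1, by simp [t.2.1, t.2.2]⟩)) ⟨?_, ?_⟩).symm
  · rintro (⟨t, ht⟩ | ⟨t, ht⟩) (⟨t', ht'⟩ | ⟨t', ht'⟩) h <;> simp_all
  · rintro ⟨_ | ⟨_ | _, t⟩, hl, hc⟩
    · simp at hl
    · exact ⟨Sum.inr ⟨t, by simpa using hl, by simpa using hc⟩, rfl⟩
    · exact ⟨Sum.inl ⟨t, by simpa using hl, by simpa using hc⟩, rfl⟩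

theorem card_length_count_zero (L : ℕ) :
    Nat.card {v : List Step // v.length = L ∧ v.count U = 0} = 1 := by
  refine Nat.card_eq_one_iff_exists.2
    ⟨⟨List.replicate L D, by simp [List.count_eq_zero, List.mem_replicate]⟩, ?_⟩
  rintro ⟨v, hl, hc⟩
  refine Subtype.ext (List.eq_replicate_iff.2 ⟨hl, fun b hb => ?_⟩)
  cases b
  · exact absurd hb (List.count_eq_zero.1 hc)
  · rfl

theorem card_length_count_eq_choose (L k : ℕ) :
    Nat.card {v : List Step // v.length = L ∧ v.count U = k} = L.choose k := by
  induction L generalizing k with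
  | zero =>
    cases k with
    | zero => exact card_length_count_zero 0
    | succ k =>
      rw [Nat.choose_zero_succ, Nat.card_eq_zero]
      exact Or.inl ⟨fun ⟨v, hl, hc⟩ => by have := List.count_le_length (a := U) (l := v); omega⟩
  | succ L ih =>
    cases k with
    | zero => rw [card_length_count_zero, Nat.choose_zero_right]
    | succ k => rw [card_length_add_one_count_add_one, ih, ih, Nat.choose_succ_succ', add_comm]

theorem grandDyckEdges_eq_card_valleys (n : ℕ) :
    grandDyckEdges n = Nat.card {q : List Step × ℕ // IsGrandDyck n q.1 ∧ IsValley q.1 q.2} := by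
  refine Nat.card_congr (Equiv.ofBijective
    (fun q => ⟨(q.1.1, flipAt q.1.1 q.1.2), q.2.2.covers q.2.1⟩) ⟨?_, ?_⟩).symm
  · rintro ⟨⟨w, i⟩, -, hv⟩ ⟨⟨w', i'⟩, -, hv'⟩
    intro heq
    simp only [Subtype.mk.injEq, Prod.mk.injEq] at heq
    obtain ⟨rfl, hflip⟩ := heq
    exact Subtype.ext (Prod.ext rfl (hv.flipAt_inj hv' hflip))
  · rintro ⟨⟨w, w'⟩, hcov⟩
    obtain ⟨hw, i, hv, hw'⟩ := covers_isGrandDyck_iff.1 hcov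
    exact ⟨⟨(w, i), hw, hv⟩, Subtype.ext (Prod.ext rfl hw'.symm)⟩

theorem isGrandDyck_append_DU_append_iff {m : ℕ} {A C : List Step} :
    IsGrandDyck (m + 1) (A ++ [D, U] ++ C) ↔ IsGrandDyck m (A ++ C) := by
  simp [IsGrandDyck]
  omega

def deleteValleyEquiv (m : ℕ) :
    {q : List Step × ℕ // IsGrandDyck (m + 1) q.1 ∧ IsValley q.1 q.2} ≃
      Fin (2 * m + 1) × {v : List Step // IsGrandDyck m v} where
  toFun q := (⟨q.1.2, by have := q.2.2.add_one_lt_length; have := q.2.1.1; omega⟩,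
    ⟨q.1.1.take q.1.2 ++ q.1.1.drop (q.1.2 + 2),
      isGrandDyck_append_DU_append_iff.1 (q.2.2.eq_append ▸ q.2.1)⟩)
  invFun p := ⟨(p.2.1.take p.1 ++ [D, U] ++ p.2.1.drop p.1, p.1), by
    have hA : (p.2.1.take p.1).length = p.1 := List.length_take_of_le (by
      have := p.1.2; have := p.2.2.1; omega)
    exact ⟨isGrandDyck_append_DU_append_iff.2 (by rw [List.take_append_drop]; exact p.2.2),
      isValley_append hA⟩⟩
  left_inv := by
    rintro ⟨⟨w, i⟩, hw, hv⟩
    dsimp only at hw hv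
    have hA : (w.take i).length = i :=
      List.length_take_of_le (by have := hv.add_one_lt_length; omega)
    refine Subtype.ext (Prod.ext ?_ rfl)
    simp only [List.take_left' hA, List.drop_left' hA]
    exact hv.eq_append.symm
  right_inv := by
    rintro ⟨i, v, hv⟩
    have hA : (v.take i).length = i := List.length_take_of_le (by have := i.2; have := hv.1; omega)
    refine Prod.ext rfl (Subtype.ext ?_)
    simp [List.append_assoc, List.take_left' hA, List.drop_append, hA,
      List.drop_eq_nil_of_le (show (v.take i).length ≤ i + 2 by omega)]

theorem grandDyckEdges_succ (m : ℕ) :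
    grandDyckEdges (m + 1) = (2 * m + 1) * (2 * m).choose m := by
  rw [grandDyckEdges_eq_card_valleys, Nat.card_congr (deleteValleyEquiv m), Nat.card_prod,
    Nat.card_eq_fintype_card, Fintype.card_fin]
  exact congrArg _ (card_length_count_eq_choose (2 * m) m)

theorem grandDyckEdges_zero : grandDyckEdges 0 = 0 := by
  rw [grandDyckEdges_eq_card_valleys, Nat.card_eq_zero]
  exact Or.inl ⟨fun ⟨⟨_, _⟩, hw, hv⟩ => by have := hv.add_one_lt_length; have := hw.1; omega⟩

theorem two_mul_grandDyckEdges (n : ℕ) : 2 * grandDyckEdges n = n * (2 * n).choose n := by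
  cases n with
  | zero => simp [grandDyckEdges_zero]
  | succ m =>
    have := Nat.succ_mul_centralBinom_succ m
    rw [Nat.centralBinom_eq_two_mul_choose, Nat.centralBinom_eq_two_mul_choose] at this
    rw [grandDyckEdges_succ, this]
    ring

/-- Twice the number of edges of the Hasse diagram of the Grand Dyck lattice `GD_n`
equals `n` times the central binomial coefficient `C(2n, n)`; equivalently, the Hasse
index of `GD_n` (number of edges divided by number of vertices) is exactly `n/2`. -/
theorem grandDyckEdges_hasse_index (n : ℕ) :
    2 * grandDyckEdges n = n * Nat.choose (2 * n) n ∧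
    (grandDyckEdges n : ℚ) / (Nat.card {w : List Step // IsGrandDyck n w} : ℚ) = (n : ℚ) / 2 := by
  have hV : Nat.card {w : List Step // IsGrandDyck n w} = (2 * n).choose n :=
    card_length_count_eq_choose (2 * n) n
  have hpos : ((2 * n).choose n : ℚ) ≠ 0 := by exact_mod_cast (Nat.choose_pos (by omega)).ne'
  have hE := two_mul_grandDyckEdges n
  refine ⟨hE, ?_⟩
  rw [hV, div_eq_div_iff hpos two_ne_zero]
  norm_cast
  linarith
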